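/- arXiv:1503.06948 — 3 statements merged into one kernel-verified Lean document; each statement's English description precedes it below -/
import Mathlib

section
/- Let U ⊆ ℂ be a bounded open set satisfying the following interior paraboloid condition: there exist constants C > 0 and ε₀ > 0 such that for every point x in the topological boundary of U there is a unit vector u ∈ ℂ with the property that every w ∈ B(x, ε₀) satisfying ⟨w − x, u⟩ > C·|w − x|² belongs to U, where ⟨a, b⟩ = Re(a · conj(b)) is the real inner product on ℂ ≅ ℝ². Then there exists δ₀ > 0 such that for every x in the closure of U and every δ with 0 < δ < δ₀, there exists y ∈ U with |y − x| ≤ δ and B(y, δ/2) ⊆ U. -/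
open Complex Metric

/-- If a bounded open set `U ⊆ ℂ` satisfies an interior paraboloid condition at
every boundary point, then there is `δ₀ > 0` such that for every point `x` of the
closure of `U` and every scale `δ < δ₀` one can find an interior point `y` within
distance `δ` of `x` whose `δ/2`-ball lies entirely inside `U`. -/
theorem interior_ball_near_every_point
    (U : Set ℂ) (hUopen : IsOpen U) (hUbdd : Bornology.IsBounded U)
    (C ε₀ : ℝ) (hC : 0 < C) (hε₀ : 0 < ε₀)
    (hpara : ∀ x ∈ frontier U, ∃ u : ℂ, ‖u‖ = 1 ∧
      ∀ w ∈ ball x ε₀, C * ‖w - x‖ ^ 2 < ((w - x) * (starRingEnd ℂ) u).re → w ∈ U) :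
    ∃ δ₀ : ℝ, 0 < δ₀ ∧ ∀ x ∈ closure U, ∀ δ : ℝ, 0 < δ → δ < δ₀ →
      ∃ y ∈ U, ‖y - x‖ ≤ δ ∧ ball y (δ / 2) ⊆ U := by
  refine ⟨min ε₀ (1 / C), lt_min hε₀ (by positivity), ?_⟩
  intro x hx δ hδ hδ₀
  have hδε : δ ≤ ε₀ := le_of_lt (lt_of_lt_of_le hδ₀ (min_le_left _ _))
  have hδC : C * δ < 1 := by
    have h1 : δ < 1 / C := lt_of_lt_of_le hδ₀ (min_le_right _ _)
    rw [lt_div_iff₀ hC] at h1; linarith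
  by_cases hA : ball x (δ / 2) ⊆ U
  · exact ⟨x, hA (mem_ball_self (by linarith)), by simp [hδ.le], hA⟩
  · -- find a frontier point z within δ/2 of x
    obtain ⟨p, hpB, hpU⟩ := Set.not_subset.mp hA
    obtain ⟨q, hqU, hqd⟩ := Metric.mem_closure_iff.mp hx (δ / 2) (by linarith)
    have hqB : q ∈ ball x (δ / 2) := by
      rw [mem_ball, dist_comm]; exact hqd
    have hzex : (ball x (δ / 2) ∩ frontier U).Nonempty := by
      by_contra hempty
      rw [Set.not_nonempty_iff_eq_empty] at hempty
      have hpc : p ∉ closure U := by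
        intro hpc
        exact Set.eq_empty_iff_forall_notMem.mp hempty p
          ⟨hpB, hUopen.frontier_eq ▸ ⟨hpc, hpU⟩⟩
      have hpre : IsPreconnected (ball x (δ / 2)) := (convex_ball x (δ / 2)).isPreconnected
      obtain ⟨r, hr⟩ := hpre U (closure U)ᶜ hUopen isClosed_closure.isOpen_compl
        (fun w hw => by
          by_cases hwU : w ∈ U
          · exact Or.inl hwU
          · refine Or.inr (fun hwc => ?_)
            exact Set.eq_empty_iff_forall_notMem.mp hempty w
              ⟨hw, hUopen.frontier_eq ▸ ⟨hwc, hwU⟩⟩)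
        ⟨q, hqB, hqU⟩ ⟨p, hpB, hpc⟩
      exact hr.2.2 (subset_closure hr.2.1)
    obtain ⟨z, hzB, hzf⟩ := hzex
    obtain ⟨u, hu, hker⟩ := hpara z hzf
    set t : ℝ := δ / 2 with ht
    have htpos : 0 < t := by positivity
    set y : ℂ := z + (t : ℂ) * u with hy
    have hyz : ‖y - z‖ = t := by
      have : y - z = (t : ℂ) * u := by rw [hy]; ring
      rw [this, norm_mul, hu, mul_one]; simp [htpos.le]
    have hball : ball y (δ / 2) ⊆ U := by
      intro w hw
      have hwv : ‖w - y‖ < t := by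
        rw [← Complex.dist_eq]; exact hw
      set v : ℂ := w - y with hv
      set b : ℝ := (v * (starRingEnd ℂ) u).re with hb
      set av : ℝ := ‖v‖ with hav
      have havt : av < t := hwv
      have hbav : |b| ≤ av := by
        calc |b| ≤ ‖v * (starRingEnd ℂ) u‖ := Complex.abs_re_le_norm _
          _ = av := by rw [norm_mul, Complex.norm_conj, hu, mul_one]
      have hb1 : b ≤ av := (abs_le.mp hbav).2
      have hb2 : -av ≤ b := (abs_le.mp hbav).1
      have hwz : w - z = (t : ℂ) * u + v := by rw [hv, hy]; ring
      have hnu : Complex.normSq u = 1 := by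
        rw [Complex.normSq_eq_norm_sq, hu, one_pow]
      -- real part computation
      have hre : ((w - z) * (starRingEnd ℂ) u).re = t + b := by
        rw [hwz, add_mul, Complex.add_re, mul_assoc, Complex.mul_conj, hnu, ← hb]
        simp
      -- squared norm computation
      have habs : ‖w - z‖ ^ 2 = t ^ 2 + av ^ 2 + 2 * t * b := by
        rw [hwz, Complex.sq_norm, Complex.normSq_add, Complex.normSq_mul,
          Complex.normSq_ofReal, hnu, mul_one]
        have h1 : ((t : ℂ) * u * (starRingEnd ℂ) v).re = t * b := by
          have hc : ((t : ℂ) * u * (starRingEnd ℂ) v) =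
              (starRingEnd ℂ) ((t : ℂ) * (v * (starRingEnd ℂ) u)) := by
            simp [map_mul, Complex.conj_conj, Complex.conj_ofReal]; ring
          rw [hc, Complex.conj_re, Complex.mul_re, Complex.ofReal_re, Complex.ofReal_im, ← hb]
          ring
        rw [h1, hav, Complex.sq_norm]
        ring
      refine hker w ?_ ?_
      · rw [mem_ball, Complex.dist_eq]
        have : ‖w - z‖ ≤ ‖w - y‖ + ‖y - z‖ := by
          have : w - z = (w - y) + (y - z) := by ring
          rw [this]; exact norm_add_le _ _
        have := this.trans_lt (by rw [hyz]; linarith : ‖w - y‖ + ‖y - z‖ < δ)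
        exact this.trans_le hδε
      · rw [hre, habs]
        have hs : 0 < t + b := by linarith
        have hav2 : av ^ 2 ≤ t ^ 2 := by nlinarith
        calc C * (t ^ 2 + av ^ 2 + 2 * t * b) ≤ C * (2 * t * (t + b)) := by nlinarith
          _ = (C * (2 * t)) * (t + b) := by ring
          _ < 1 * (t + b) := by
              apply mul_lt_mul_of_pos_right _ hs
              calc C * (2 * t) = C * δ := by rw [ht]; ring
                _ < 1 := hδC
          _ = t + b := one_mul _
    refine ⟨y, hball (mem_ball_self (by linarith)), ?_, hball⟩
    have hzx : ‖z - x‖ < δ / 2 := by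
      rw [← Complex.dist_eq]; exact hzB
    have : y - x = (y - z) + (z - x) := by ring
    rw [this]
    calc ‖(y - z) + (z - x)‖ ≤ ‖y - z‖ + ‖z - x‖ :=
          norm_add_le _ _
      _ ≤ δ := by rw [hyz]; linarith
end

section
/- Let V be a finite type with at least two elements and let G be a connected simple graph on V. Let P be the V × V real matrix with P(x,y) = 1/deg(x) if x and y are adjacent in G and P(x,y) = 0 otherwise, and let Q = P − I. Let f : V → ℝ satisfy Σ_{x ∈ V} deg(x) · f(x) = 0. Then for each x ∈ V the function t ↦ (exp(tQ) f)(x) is integrable on [0,∞), and the function g : V → ℝ defined by g(x) = ∫₀^∞ (exp(tQ) f)(x) dt satisfies, for every x ∈ V, g(x) − (1/deg(x)) Σ_{y ∼ x} g(y) = f(x); that is, the discrete Laplacian of g equals f. -/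
/-!
With `D` the degree matrix and `L` the graph Laplacian, `Q = P - 1 = -D⁻¹L` is similar, through
`D^{-1/2}`, to minus the normalized Laplacian `D^{-1/2} L D^{-1/2}`, which is symmetric and
positive semidefinite. Hence `Q` has a basis of eigenvectors `w` with eigenvalues `μ ≤ 0`, and
since `G` is connected, `μ = 0` only on the constants, the kernel of `L`. The condition
`∑ deg x * f x = 0` says exactly that `f` has no component along the constants, so `exp (t Q) f`
is a combination of exponentially decaying terms `c e^{μ t} w` with `μ < 0`. Integrating term by
term gives `g = ∑ -(c / μ) w`, so `Q g = -f`, which is `g - P g = f`.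
-/

open Matrix MeasureTheory

section MatrixExp

-- Summability of the exponential series needs some Banach-algebra norm on matrices; it is kept
-- local so that later statements elaborate `NormedSpace.exp` with the default instances.
attribute [local instance] Matrix.linftyOpNormedAddCommGroup Matrix.linftyOpNormedRing
  Matrix.linftyOpNormedAlgebra

variable {ι : Type*} [Fintype ι] [DecidableEq ι]

theorem Matrix.exp_mulVec_of_mulVec_eq_smul {M : Matrix ι ι ℝ} {v : ι → ℝ} {μ : ℝ}
    (h : M *ᵥ v = μ • v) : NormedSpace.exp M *ᵥ v = Real.exp μ • v := by
  have hpow (n : ℕ) : M ^ n *ᵥ v = μ ^ n • v := by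
    induction n with
    | zero => simp
    | succ n ih => rw [pow_succ', ← mulVec_mulVec, ih, mulVec_smul, h, smul_smul, pow_succ]
  let evalAt : Matrix ι ι ℝ →L[ℝ] (ι → ℝ) :=
    LinearMap.toContinuousLinearMap ((mulVecBilin ℝ ℝ).flip v)
  calc NormedSpace.exp M *ᵥ v = evalAt (∑' n : ℕ, (n.factorial : ℝ)⁻¹ • M ^ n) := by
        rw [NormedSpace.exp_eq_tsum ℝ]; rfl
    _ = ∑' n : ℕ, ((n.factorial : ℝ)⁻¹ • μ ^ n) • v := by
        rw [evalAt.map_tsum (NormedSpace.expSeries_summable' M)]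
        congr! 1 with n
        simp [evalAt, mulVecBilin_apply, hpow, smul_smul]
    _ = Real.exp μ • v := by
        rw [(NormedSpace.expSeries_summable' (𝕂 := ℝ) μ).tsum_smul_const, Real.exp_eq_exp_ℝ,
          NormedSpace.exp_eq_tsum ℝ]

end MatrixExp

theorem integrableOn_const_mul_exp_mul_Ici {c μ : ℝ} (h : c ≠ 0 → μ < 0) :
    IntegrableOn (fun t => c * Real.exp (μ * t)) (Set.Ici 0) := by
  rcases eq_or_ne c 0 with rfl | hc
  · simp
  · exact (integrableOn_Ici_iff_integrableOn_Ioi).mpr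
      ((integrableOn_exp_mul_Ioi (h hc) 0).const_mul c)

theorem integral_const_mul_exp_mul_Ici {c μ : ℝ} (h : c ≠ 0 → μ < 0) :
    ∫ t in Set.Ici 0, c * Real.exp (μ * t) = -(c / μ) := by
  rcases eq_or_ne c 0 with rfl | hc
  · simp
  · rw [integral_Ici_eq_integral_Ioi, integral_const_mul, integral_exp_mul_Ioi (h hc)]
    simp [div_eq_mul_inv]

section Eigen

variable {ι κ : Type*} [Fintype ι] [DecidableEq ι] [Fintype κ]
  {Q : Matrix ι ι ℝ} {w : κ → ι → ℝ} {μ : κ → ℝ} {c : κ → ℝ}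

theorem exp_smul_mulVec_sum_eigen (hQw : ∀ k, Q *ᵥ w k = μ k • w k) (t : ℝ) :
    NormedSpace.exp (t • Q) *ᵥ ∑ k, c k • w k = ∑ k, (c k * Real.exp (μ k * t)) • w k := by
  simp only [mulVec_sum, mulVec_smul]
  refine Finset.sum_congr rfl fun k _ => ?_
  have hw : (t • Q) *ᵥ w k = (μ k * t) • w k := by rw [smul_mulVec, hQw, smul_smul, mul_comm]
  rw [exp_mulVec_of_mulVec_eq_smul hw, smul_smul]

theorem exp_smul_mulVec_sum_eigen_apply (hQw : ∀ k, Q *ᵥ w k = μ k • w k) (t : ℝ) (x : ι) :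
    (NormedSpace.exp (t • Q) *ᵥ ∑ k, c k • w k) x = ∑ k, c k * Real.exp (μ k * t) * w k x := by
  simp [exp_smul_mulVec_sum_eigen hQw, Finset.sum_apply]

theorem integrableOn_exp_smul_mulVec_sum_eigen_apply (hQw : ∀ k, Q *ᵥ w k = μ k • w k)
    (hc : ∀ k, c k ≠ 0 → μ k < 0) (x : ι) :
    IntegrableOn (fun t : ℝ => (NormedSpace.exp (t • Q) *ᵥ ∑ k, c k • w k) x) (Set.Ici 0) := by
  simp only [exp_smul_mulVec_sum_eigen_apply hQw]
  exact integrable_finsetSum _ fun k _ =>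
    (integrableOn_const_mul_exp_mul_Ici (hc k)).mul_const (w k x)

theorem mulVec_integral_exp_smul_mulVec_sum_eigen (hQw : ∀ k, Q *ᵥ w k = μ k • w k)
    (hc : ∀ k, c k ≠ 0 → μ k < 0) :
    Q *ᵥ (fun x => ∫ t in Set.Ici (0 : ℝ), (NormedSpace.exp (t • Q) *ᵥ ∑ k, c k • w k) x) =
      -∑ k, c k • w k := by
  have hintegral (x : ι) :
      ∫ t in Set.Ici (0 : ℝ), (NormedSpace.exp (t • Q) *ᵥ ∑ k, c k • w k) x =
        (∑ k, (-(c k / μ k)) • w k) x := by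
    simp only [exp_smul_mulVec_sum_eigen_apply hQw]
    rw [integral_finsetSum _ fun k _ =>
      (integrableOn_const_mul_exp_mul_Ici (hc k)).mul_const (w k x)]
    simp [integral_mul_const, integral_const_mul_exp_mul_Ici (hc _), Finset.sum_apply]
  rw [funext hintegral, mulVec_sum, ← Finset.sum_neg_distrib]
  refine Finset.sum_congr rfl fun k _ => ?_
  rw [mulVec_smul, hQw, smul_smul, ← neg_smul]
  rcases eq_or_ne (c k) 0 with hck | hck
  · simp [hck]
  · rw [neg_mul, div_mul_cancel₀ _ (hc k hck).ne]

end Eigen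

theorem OrthonormalBasis.sum_dotProduct_smul {ι κ : Type*} [Fintype ι] [Fintype κ]
    (b : OrthonormalBasis κ ℝ (EuclideanSpace ℝ ι)) (u : ι → ℝ) :
    ∑ k, (u ⬝ᵥ ⇑(b k)) • ⇑(b k) = u := by
  have := congrArg WithLp.ofLp (b.sum_repr' (WithLp.toLp 2 u))
  simpa [WithLp.ofLp_sum, EuclideanSpace.inner_eq_star_dotProduct] using this

namespace SimpleGraph

variable {V : Type*} [Fintype V] [DecidableEq V] (G : SimpleGraph V) [DecidableRel G.Adj]

noncomputable def randomWalkMatrix : Matrix V V ℝ :=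
  diagonal (fun x => (G.degree x : ℝ)⁻¹) * G.adjMatrix ℝ

noncomputable def invSqrtDegMatrix : Matrix V V ℝ :=
  diagonal fun x => (√(G.degree x))⁻¹

noncomputable def normLapMatrix : Matrix V V ℝ :=
  G.invSqrtDegMatrix * G.lapMatrix ℝ * G.invSqrtDegMatrix

theorem randomWalkMatrix_apply (x y : V) :
    G.randomWalkMatrix x y = if G.Adj x y then 1 / (G.degree x : ℝ) else 0 := by
  rw [randomWalkMatrix, diagonal_mul, adjMatrix_apply]
  split_ifs <;> simp

theorem randomWalkMatrix_mulVec_apply (g : V → ℝ) (x : V) :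
    (G.randomWalkMatrix *ᵥ g) x = 1 / (G.degree x : ℝ) * ∑ y ∈ G.neighborFinset x, g y := by
  rw [randomWalkMatrix, ← mulVec_mulVec, mulVec_diagonal, adjMatrix_mulVec_apply, one_div]

theorem posSemidef_normLapMatrix : G.normLapMatrix.PosSemidef := by
  have hS : G.invSqrtDegMatrixᴴ = G.invSqrtDegMatrix := by simp [invSqrtDegMatrix]
  simpa only [normLapMatrix, hS] using
    (posSemidef_lapMatrix ℝ G).mul_mul_conjTranspose_same G.invSqrtDegMatrix

theorem invSqrtDegMatrix_mul_self :
    G.invSqrtDegMatrix * G.invSqrtDegMatrix = diagonal fun x => (G.degree x : ℝ)⁻¹ := by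
  simp [invSqrtDegMatrix, diagonal_mul_diagonal, ← mul_inv, Real.mul_self_sqrt]

variable {G}

theorem diagonal_inv_degree_mul_lapMatrix (hdeg : ∀ x, 0 < G.degree x) :
    diagonal (fun x => (G.degree x : ℝ)⁻¹) * G.lapMatrix ℝ = 1 - G.randomWalkMatrix := by
  have hinv : diagonal (fun x => (G.degree x : ℝ)⁻¹) * G.degMatrix ℝ = 1 := by
    rw [degMatrix, diagonal_mul_diagonal, ← diagonal_one]
    exact congrArg diagonal (funext fun x => inv_mul_cancel₀ (by exact_mod_cast (hdeg x).ne'))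
  rw [lapMatrix, mul_sub, hinv, randomWalkMatrix]

theorem randomWalkMatrix_sub_one_mul_invSqrtDegMatrix (hdeg : ∀ x, 0 < G.degree x) :
    (G.randomWalkMatrix - 1) * G.invSqrtDegMatrix = -(G.invSqrtDegMatrix * G.normLapMatrix) := by
  rw [normLapMatrix, ← mul_assoc, ← mul_assoc, invSqrtDegMatrix_mul_self,
    diagonal_inv_degree_mul_lapMatrix hdeg, ← neg_mul, neg_sub]

theorem invSqrtDegMatrix_mulVec_injective (hdeg : ∀ x, 0 < G.degree x) :
    Function.Injective (G.invSqrtDegMatrix *ᵥ ·) := by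
  intro u v huv
  funext x
  have := congrFun huv x
  simp only [invSqrtDegMatrix, mulVec_diagonal] at this
  exact mul_left_cancel₀ (inv_ne_zero (Real.sqrt_pos.mpr (by exact_mod_cast hdeg x)).ne') this

theorem exists_eq_smul_sqrt_degree_of_normLapMatrix_mulVec_eq_zero (hconn : G.Connected)
    (hdeg : ∀ x, 0 < G.degree x) {v : V → ℝ} (hv : G.normLapMatrix *ᵥ v = 0) :
    ∃ a : ℝ, v = a • fun x => √(G.degree x) := by
  set u := G.invSqrtDegMatrix *ᵥ v
  have hLu : G.lapMatrix ℝ *ᵥ u = 0 := by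
    apply invSqrtDegMatrix_mulVec_injective hdeg
    simpa [u, normLapMatrix, mulVec_mulVec, mul_assoc] using hv
  have hconst := (lapMatrix_mulVec_eq_zero_iff_forall_reachable G).mp hLu
  obtain ⟨x₀⟩ := hconn.nonempty
  refine ⟨u x₀, funext fun x => ?_⟩
  have hsqrt : √(G.degree x : ℝ) ≠ 0 := (Real.sqrt_pos.mpr (by exact_mod_cast hdeg x)).ne'
  have hux : u x = (√(G.degree x))⁻¹ * v x := by simp [u, invSqrtDegMatrix, mulVec_diagonal]
  rw [Pi.smul_apply, smul_eq_mul, ← hconst x x₀ (hconn.preconnected x x₀), hux]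
  field_simp

theorem exists_eigen_expansion_of_sum_degree_mul_eq_zero (hconn : G.Connected)
    (hdeg : ∀ x, 0 < G.degree x) {f : V → ℝ} (hf : ∑ x, (G.degree x : ℝ) * f x = 0) :
    ∃ (w : V → V → ℝ) (μ c : V → ℝ), (∀ k, (G.randomWalkMatrix - 1) *ᵥ w k = μ k • w k) ∧
      (∀ k, c k ≠ 0 → μ k < 0) ∧ f = ∑ k, c k • w k := by
  have hN := G.posSemidef_normLapMatrix
  set e : V → V → ℝ := fun k => ⇑(hN.1.eigenvectorBasis k)
  set u : V → ℝ := fun x => √(G.degree x) * f x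
  refine ⟨fun k => G.invSqrtDegMatrix *ᵥ e k, fun k => -hN.1.eigenvalues k,
    fun k => u ⬝ᵥ e k, fun k => ?_, fun k hk => ?_, ?_⟩
  · rw [mulVec_mulVec, randomWalkMatrix_sub_one_mul_invSqrtDegMatrix hdeg, neg_mulVec,
      ← mulVec_mulVec, hN.1.mulVec_eigenvectorBasis, mulVec_smul, neg_smul]
  · refine neg_neg_of_pos ((hN.eigenvalues_nonneg k).lt_of_ne' fun h0 => hk ?_)
    obtain ⟨a, ha⟩ := exists_eq_smul_sqrt_degree_of_normLapMatrix_mulVec_eq_zero hconn hdeg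
      (v := e k) (by rw [hN.1.mulVec_eigenvectorBasis, h0, zero_smul])
    have hu : u ⬝ᵥ (fun x => √(G.degree x)) = 0 := by
      simpa [dotProduct, u, mul_right_comm _ (f _), Real.mul_self_sqrt] using hf
    change u ⬝ᵥ e k = 0
    rw [ha, dotProduct_smul, hu, smul_zero]
  · have hu : G.invSqrtDegMatrix *ᵥ u = f := by
      funext x
      simp [invSqrtDegMatrix, mulVec_diagonal, u, (hdeg x).ne']
    calc f = G.invSqrtDegMatrix *ᵥ ∑ k, (u ⬝ᵥ e k) • e k := by
          rw [(hN.1.eigenvectorBasis).sum_dotProduct_smul, hu]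
      _ = _ := by simp only [mulVec_sum, mulVec_smul]

end SimpleGraph

/-- On a finite connected simple graph, the occupation-time Green function of the
continuous-time simple random walk, integrated against a function `f` of zero mean
with respect to the degree measure, has discrete Laplacian equal to `f`. -/
theorem discrete_green_function_laplacian
    (V : Type*) [Fintype V] [DecidableEq V] (hcard : 1 < Fintype.card V)
    (G : SimpleGraph V) [DecidableRel G.Adj] (hconn : G.Connected)
    (P : Matrix V V ℝ)
    (hP : ∀ x y : V, P x y = if G.Adj x y then (1 : ℝ) / (G.degree x) else 0)
    (Q : Matrix V V ℝ) (hQ : Q = P - 1)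
    (f : V → ℝ) (hf : ∑ x : V, (G.degree x : ℝ) * f x = 0)
    (g : V → ℝ)
    (hg : ∀ x : V, g x = ∫ t in Set.Ici (0 : ℝ), ((NormedSpace.exp (t • Q)).mulVec f) x) :
    (∀ x : V, IntegrableOn (fun t : ℝ => ((NormedSpace.exp (t • Q)).mulVec f) x)
        (Set.Ici (0 : ℝ)) volume) ∧
    ∀ x : V, g x - (1 / (G.degree x : ℝ)) * ∑ y ∈ G.neighborFinset x, g y = f x := by
  have : Nontrivial V := Fintype.one_lt_card_iff_nontrivial.mp hcard
  have hdeg (x : V) : 0 < G.degree x := hconn.preconnected.degree_pos_of_nontrivial x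
  obtain rfl : P = G.randomWalkMatrix :=
    Matrix.ext fun x y => (hP x y).trans (G.randomWalkMatrix_apply x y).symm
  obtain ⟨w, μ, c, hQw, hc, rfl⟩ :=
    SimpleGraph.exists_eigen_expansion_of_sum_degree_mul_eq_zero hconn hdeg hf
  subst hQ
  refine ⟨integrableOn_exp_smul_mulVec_sum_eigen_apply hQw hc, fun x => ?_⟩
  have hQg := congrFun (mulVec_integral_exp_smul_mulVec_sum_eigen hQw hc) x
  rw [← funext hg, sub_mulVec, one_mulVec, Pi.sub_apply, Pi.neg_apply,
    G.randomWalkMatrix_mulVec_apply] at hQg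
  linarith
end

section
/- Let K ⊆ ℂ be a compact set and let p : ℝ × ℂ × ℂ → ℝ be continuous on (0,∞) × K × K with p(t,z,ζ) ≥ 0 and ∫_K p(t,z,ζ) dA(ζ) ≤ 1 for all t > 0 and z ∈ K. Let y ∈ ℂ and r > 0 with the closed ball B̄(y,r) ⊆ K, and let (g_j)_{j≥1} be a bump approximation of B(y,r). Then for every T > 0 and every ε > 0 there exists J such that for all j ≥ J, sup_{z ∈ K} | ∫₀^T [ ∫_K p(t,z,ζ) g_j(ζ) dA(ζ) − ∫_{B(y,r)} p(t,z,ζ) dA(ζ) ] dt | ≤ ε. -/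
open Complex MeasureTheory Metric
open scoped ENNReal

/-- A bump approximation of the ball `B(y,r)`: a sequence of `C^∞` functions
`g j : ℂ → [0,1]` equal to `1` on the closed ball of radius `r(1 − 1/j)` and
vanishing outside the open ball of radius `r(1 − 1/(2j))`. -/
def IsBumpApproximation (y : ℂ) (r : ℝ) (g : ℕ → ℂ → ℝ) : Prop :=
  ∀ j : ℕ, 1 ≤ j →
    ContDiff ℝ (⊤ : ℕ∞) (g j) ∧ (∀ ζ : ℂ, g j ζ ∈ Set.Icc (0 : ℝ) 1) ∧
    (∀ ζ ∈ closedBall y (r * (1 - 1 / (j : ℝ))), g j ζ = 1) ∧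
    (∀ ζ ∉ ball y (r * (1 - 1 / (2 * (j : ℝ)))), g j ζ = 0)

/-- Time-integrals of a sub-probability kernel against smooth bumps approximate
the time-integrals of the kernel over the ball, uniformly in the source point. -/
theorem bump_time_integral_approx
    (K : Set ℂ) (hK : IsCompact K)
    (p : ℝ → ℂ → ℂ → ℝ)
    (hp_cont : ContinuousOn (fun q : ℝ × ℂ × ℂ => p q.1 q.2.1 q.2.2)
      (Set.Ioi (0 : ℝ) ×ˢ K ×ˢ K))
    (hp_nonneg : ∀ t > (0 : ℝ), ∀ z ∈ K, ∀ ζ ∈ K, 0 ≤ p t z ζ)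
    (hp_subprob : ∀ t > (0 : ℝ), ∀ z ∈ K, (∫ ζ in K, p t z ζ) ≤ 1)
    (y : ℂ) (r : ℝ) (hr : 0 < r) (hball : closedBall y r ⊆ K)
    (g : ℕ → ℂ → ℝ) (hg : IsBumpApproximation y r g) :
    ∀ T > (0 : ℝ), ∀ ε > (0 : ℝ), ∃ J : ℕ, ∀ j : ℕ, J ≤ j → ∀ z ∈ K,
      |∫ t in (0 : ℝ)..T,
          ((∫ ζ in K, p t z ζ * g j ζ) - ∫ ζ in ball y r, p t z ζ)| ≤ ε := by
  intro T hT ε hε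
  have hKmeas : MeasurableSet K := hK.isClosed.measurableSet
  have hballK : ball y r ⊆ K := (ball_subset_closedBall).trans hball
  -- continuity and integrability of `p t z ·` on `K`
  have hcontK : ∀ t : ℝ, 0 < t → ∀ z ∈ K, ContinuousOn (fun ζ => p t z ζ) K := by
    intro t ht z hz
    have hmap : Set.MapsTo (fun ζ : ℂ => ((t, z, ζ) : ℝ × ℂ × ℂ)) K
        (Set.Ioi (0:ℝ) ×ˢ K ×ˢ K) := fun ζ hζ => ⟨ht, hz, hζ⟩
    exact hp_cont.comp
      ((continuous_const.prodMk (continuous_const.prodMk continuous_id)).continuousOn) hmap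
  have hpint : ∀ t : ℝ, 0 < t → ∀ z ∈ K, IntegrableOn (fun ζ => p t z ζ) K :=
    fun t ht z hz => (hcontK t ht z hz).integrableOn_compact hK
  -- the annuli
  set A : ℕ → Set ℂ := fun j => ball y r \ closedBall y (r * (1 - 1/(j:ℝ))) with hAdef
  have hAmeas : ∀ j, MeasurableSet (A j) :=
    fun j => measurableSet_ball.diff measurableSet_closedBall
  have hAball : ∀ j, A j ⊆ ball y r := fun j => Set.diff_subset
  have hAfin : ∀ j, volume (A j) < ∞ :=
    fun j => lt_of_le_of_lt (measure_mono (hAball j)) measure_ball_lt_top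
  have hAmono : ∀ k j : ℕ, 1 ≤ k → k ≤ j → A j ⊆ A k := by
    intro k j hk hkj
    apply Set.diff_subset_diff_right
    apply closedBall_subset_closedBall
    have hk0 : (0:ℝ) < k := by exact_mod_cast hk
    have hj0 : (0:ℝ) < j := lt_of_lt_of_le hk0 (by exact_mod_cast hkj)
    have h1 : (1:ℝ)/j ≤ 1/k := by
      apply one_div_le_one_div_of_le hk0
      exact_mod_cast hkj
    nlinarith
  -- choose δ
  set δ : ℝ := min (ε/2) T with hδdef
  have hδ0 : 0 < δ := lt_min (by linarith) hT
  have hδT : δ ≤ T := min_le_right _ _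
  have hδε : δ ≤ ε/2 := min_le_left _ _
  -- bound M on [δ, T] × K × K
  obtain ⟨M, hM⟩ := (isCompact_Icc.prod (hK.prod hK)).exists_bound_of_continuousOn
    (hp_cont.mono (by
      rintro ⟨t, z, ζ⟩ ⟨ht, hzζ⟩
      exact ⟨lt_of_lt_of_le hδ0 ht.1, hzζ⟩))
  set M' : ℝ := max M 0 with hM'def
  have hM'0 : 0 ≤ M' := le_max_right _ _
  set η : ℝ := ε / (2 * T * (M' + 1)) with hηdef
  have hη0 : 0 < η := by positivity
  -- choose J via continuity from above
  have hinter : ⋂ n : ℕ, A (n+1) = ∅ := by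
    ext x
    simp only [Set.mem_iInter, Set.mem_empty_iff_false, iff_false, not_forall]
    by_cases hx : x ∈ ball y r
    · have hd : dist x y < r := mem_ball.mp hx
      obtain ⟨n, hn⟩ := exists_nat_gt (r / (r - dist x y))
      refine ⟨n, fun hmem => ?_⟩
      have hnd : x ∉ closedBall y (r * (1 - 1/((n:ℝ)+1))) := by
        have := hmem.2; push_cast at this; exact this
      have hgt : r * (1 - 1/((n:ℝ)+1)) < dist x y := by
        by_contra hcon
        exact hnd (mem_closedBall.mpr (not_lt.mp hcon))
      have hrpos : (0:ℝ) < r - dist x y := by linarith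
      have hn1 : r / (r - dist x y) < (n:ℝ) + 1 := by
        have : (n:ℝ) ≤ (n:ℝ) + 1 := by linarith
        linarith
      have hnn : (0:ℝ) < (n:ℝ) + 1 := by positivity
      rw [div_lt_iff₀ hrpos] at hn1
      have h2 : r / ((n:ℝ)+1) < r - dist x y := by
        rw [div_lt_iff₀ hnn]; nlinarith
      have : r * (1 - 1/((n:ℝ)+1)) = r - r/((n:ℝ)+1) := by ring
      nlinarith
    · exact ⟨0, fun hmem => hx (hAball _ hmem)⟩
  have htend : Filter.Tendsto (fun n : ℕ => volume (A (n+1))) Filter.atTop (nhds 0) := by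
    have := tendsto_measure_iInter_atTop (μ := volume) (s := fun n : ℕ => A (n+1))
      (fun n => (hAmeas (n+1)).nullMeasurableSet)
      (fun n m hnm => hAmono (n+1) (m+1) (by omega) (by omega))
      ⟨0, (hAfin 1).ne⟩
    rw [hinter] at this
    simpa [Function.comp_def] using this
  obtain ⟨N, hN⟩ := (htend.eventually (gt_mem_nhds (show (0:ℝ≥0∞) < ENNReal.ofReal η from
    ENNReal.ofReal_pos.mpr hη0))).exists
  set J : ℕ := N + 1 with hJdef
  have hJ1 : 1 ≤ J := by omega
  have hvolJ : volume (A J) < ENNReal.ofReal η := hN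
  refine ⟨J, fun j hj z hz => ?_⟩
  have hj1 : 1 ≤ j := le_trans hJ1 hj
  obtain ⟨hgsmooth, hgmem, hgone, hgzero⟩ := hg j hj1
  -- g j vanishes outside ball y r
  have hgout : ∀ ζ : ℂ, ζ ∉ ball y r → g j ζ = 0 := by
    intro ζ hζ
    apply hgzero
    intro hmem
    apply hζ
    apply ball_subset_ball _ hmem
    have hj0 : (0:ℝ) < j := by exact_mod_cast hj1
    have : (0:ℝ) ≤ 1/(2*(j:ℝ)) := by positivity
    nlinarith
  -- key pointwise bound
  have key : ∀ t : ℝ, 0 < t →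
      |(∫ ζ in K, p t z ζ * g j ζ) - ∫ ζ in ball y r, p t z ζ| ≤ ∫ ζ in A j, p t z ζ := by
    intro t ht
    have hint : IntegrableOn (fun ζ => p t z ζ) K := hpint t ht z hz
    have hintball : IntegrableOn (fun ζ => p t z ζ) (ball y r) := hint.mono_set hballK
    have hgcont : Continuous (g j) := hgsmooth.continuous
    have hintg : IntegrableOn (fun ζ => p t z ζ * g j ζ) K := by
      have : ContinuousOn (fun ζ => p t z ζ * g j ζ) K :=
        (hcontK t ht z hz).mul hgcont.continuousOn
      exact this.integrableOn_compact hK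
    have hintgball : IntegrableOn (fun ζ => p t z ζ * g j ζ) (ball y r) :=
      hintg.mono_set hballK
    -- restrict the first integral to the ball
    have hrestrict : (∫ ζ in K, p t z ζ * g j ζ) = ∫ ζ in ball y r, p t z ζ * g j ζ := by
      have heq : (fun ζ => p t z ζ * g j ζ)
          = Set.indicator (ball y r) (fun ζ => p t z ζ * g j ζ) := by
        funext ζ
        by_cases hζ : ζ ∈ ball y r
        · rw [Set.indicator_of_mem hζ]
        · rw [Set.indicator_of_notMem hζ, hgout ζ hζ, mul_zero]
      calc (∫ ζ in K, p t z ζ * g j ζ)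
          = ∫ ζ in K, Set.indicator (ball y r) (fun ζ => p t z ζ * g j ζ) ζ := by rw [← heq]
        _ = ∫ ζ in K ∩ ball y r, p t z ζ * g j ζ := by
            rw [setIntegral_indicator measurableSet_ball]
        _ = ∫ ζ in ball y r, p t z ζ * g j ζ := by
            rw [Set.inter_eq_self_of_subset_right hballK]
    rw [hrestrict, ← integral_sub hintgball hintball]
    -- now bound by the integral over the annulus
    calc |∫ ζ in ball y r, (p t z ζ * g j ζ - p t z ζ)|
        ≤ ∫ ζ in ball y r, |p t z ζ * g j ζ - p t z ζ| := by
          simpa [Real.norm_eq_abs] using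
            norm_integral_le_integral_norm (μ := volume.restrict (ball y r))
              (fun ζ => p t z ζ * g j ζ - p t z ζ)
      _ ≤ ∫ ζ in ball y r, Set.indicator (A j) (fun ζ => p t z ζ) ζ := by
          apply setIntegral_mono_on
          · exact (hintgball.sub hintball).abs
          · exact (hint.indicator (hAmeas j)).mono_set hballK
          · exact measurableSet_ball
          · intro ζ hζ
            have hpnn : 0 ≤ p t z ζ := hp_nonneg t ht z hz ζ (hballK hζ)
            by_cases hζ2 : ζ ∈ closedBall y (r * (1 - 1/(j:ℝ)))
            · rw [hgone ζ hζ2, mul_one, sub_self, abs_zero]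
              exact Set.indicator_nonneg (fun ζ' hζ' => hp_nonneg t ht z hz ζ'
                (hballK (hAball j hζ'))) ζ
            · have hmem : ζ ∈ A j := ⟨hζ, hζ2⟩
              rw [Set.indicator_of_mem hmem]
              have hg01 := hgmem ζ
              rw [abs_le]
              constructor <;> nlinarith [hg01.1, hg01.2]
      _ = ∫ ζ in A j, p t z ζ := by
          rw [setIntegral_indicator (hAmeas j),
            Set.inter_eq_self_of_subset_right (hAball j)]
  -- the bound function
  set C : ℝ := ε / (2 * T) with hCdef
  have hC0 : 0 < C := by positivity
  set b : ℝ → ℝ := fun t => if t ≤ δ then 1 else C with hbdef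
  -- the annulus integral is at most b t
  have small : ∀ t ∈ Set.Ioc (0:ℝ) T, (∫ ζ in A j, p t z ζ) ≤ b t := by
    intro t ht
    have hint : IntegrableOn (fun ζ => p t z ζ) K := hpint t ht.1 z hz
    by_cases htδ : t ≤ δ
    · -- bound by 1
      have h1 : (∫ ζ in A j, p t z ζ) ≤ ∫ ζ in K, p t z ζ := by
        apply setIntegral_mono_set hint
        · exact (ae_restrict_iff' hKmeas).mpr (Filter.Eventually.of_forall
            (fun ζ hζ => hp_nonneg t ht.1 z hz ζ hζ))
        · exact HasSubset.Subset.eventuallyLE (fun ζ hζ => hballK (hAball j hζ))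
      simp only [hbdef, if_pos htδ]
      exact h1.trans (hp_subprob t ht.1 z hz)
    · -- bound by M' * volume
      push_neg at htδ
      have hbound : ‖∫ ζ in A j, p t z ζ‖ ≤ M' * (volume (A j)).toReal := by
        apply norm_setIntegral_le_of_norm_le_const (hAfin j)
        intro ζ hζ
        have hζK : ζ ∈ K := hballK (hAball j hζ)
        have := hM (t, z, ζ) ⟨⟨le_of_lt htδ, ht.2⟩, hz, hζK⟩
        calc ‖p t z ζ‖ ≤ M := this
          _ ≤ M' := le_max_left _ _
      have hvol : (volume (A j)).toReal ≤ η := by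
        have hsub : A j ⊆ A J := hAmono J j hJ1 hj
        have h1 : volume (A j) ≤ volume (A J) := measure_mono hsub
        have h2 : volume (A j) ≤ ENNReal.ofReal η := le_of_lt (lt_of_le_of_lt h1 hvolJ)
        calc (volume (A j)).toReal ≤ (ENNReal.ofReal η).toReal :=
              ENNReal.toReal_mono ENNReal.ofReal_ne_top h2
          _ = η := ENNReal.toReal_ofReal hη0.le
      have : (∫ ζ in A j, p t z ζ) ≤ M' * η := by
        calc (∫ ζ in A j, p t z ζ) ≤ ‖∫ ζ in A j, p t z ζ‖ := le_abs_self _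
          _ ≤ M' * (volume (A j)).toReal := hbound
          _ ≤ M' * η := by nlinarith
      simp only [hbdef, if_neg (not_le.mpr htδ)]
      calc (∫ ζ in A j, p t z ζ) ≤ M' * η := this
        _ ≤ (M' + 1) * η := by nlinarith
        _ = C := by
            rw [hηdef, hCdef]
            field_simp
  -- integrability of the bound function on the two pieces
  have hbi1 : IntegrableOn b (Set.Ioc (0:ℝ) δ) :=
    ((integrableOn_const_iff (C := (1:ℝ))).mpr (Or.inr measure_Ioc_lt_top)).congr_fun
      (fun t ht => by simp [hbdef, ht.2]) measurableSet_Ioc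
  have hbi2 : IntegrableOn b (Set.Ioc δ T) :=
    ((integrableOn_const_iff (C := C)).mpr (Or.inr measure_Ioc_lt_top)).congr_fun
      (fun t ht => by simp [hbdef, not_le.mpr ht.1]) measurableSet_Ioc
  have hsplit : Set.Ioc (0:ℝ) T = Set.Ioc 0 δ ∪ Set.Ioc δ T :=
    (Set.Ioc_union_Ioc_eq_Ioc hδ0.le hδT).symm
  have hbi : IntegrableOn b (Set.Ioc (0:ℝ) T) := by
    rw [hsplit]; exact hbi1.union hbi2
  -- compute the integral of the bound function
  have hbval : (∫ t in Set.Ioc (0:ℝ) T, b t) ≤ ε := by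
    have h1 : (∫ t in Set.Ioc (0:ℝ) δ, b t) = δ := by
      rw [setIntegral_congr_fun measurableSet_Ioc
        (fun t ht => by simp [hbdef, ht.2] : Set.EqOn b (fun _ => (1:ℝ)) (Set.Ioc 0 δ))]
      rw [setIntegral_const]
      simp [Real.volume_Ioc, ENNReal.toReal_ofReal hδ0.le, hδ0.le]
    have h2 : (∫ t in Set.Ioc δ T, b t) = (T - δ) * C := by
      rw [setIntegral_congr_fun measurableSet_Ioc
        (fun t ht => by simp [hbdef, not_le.mpr ht.1] : Set.EqOn b (fun _ => C) (Set.Ioc δ T))]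
      rw [setIntegral_const]
      simp [Real.volume_Ioc, ENNReal.toReal_ofReal (by linarith : (0:ℝ) ≤ T - δ), hδT]
    have h3 : (∫ t in Set.Ioc (0:ℝ) T, b t) = δ + (T - δ) * C := by
      rw [hsplit, setIntegral_union (Set.Ioc_disjoint_Ioc_of_le le_rfl) measurableSet_Ioc hbi1 hbi2,
        h1, h2]
    rw [h3, hCdef]
    have hTC : (T - δ) * (ε / (2 * T)) ≤ T * (ε / (2 * T)) := by
      apply mul_le_mul_of_nonneg_right (by linarith) (by positivity)
    have : T * (ε / (2 * T)) = ε / 2 := by field_simp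
    linarith
  -- assemble
  have habs : |∫ t in (0:ℝ)..T,
      ((∫ ζ in K, p t z ζ * g j ζ) - ∫ ζ in ball y r, p t z ζ)| ≤
      ∫ t in (0:ℝ)..T,
        |(∫ ζ in K, p t z ζ * g j ζ) - ∫ ζ in ball y r, p t z ζ| :=
    intervalIntegral.abs_integral_le_integral_abs hT.le
  have heqI : (∫ t in (0:ℝ)..T,
      |(∫ ζ in K, p t z ζ * g j ζ) - ∫ ζ in ball y r, p t z ζ|) =
      ∫ t in Set.Ioc (0:ℝ) T,
        |(∫ ζ in K, p t z ζ * g j ζ) - ∫ ζ in ball y r, p t z ζ| :=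
    intervalIntegral.integral_of_le hT.le
  have hmono : (∫ t in Set.Ioc (0:ℝ) T,
      |(∫ ζ in K, p t z ζ * g j ζ) - ∫ ζ in ball y r, p t z ζ|) ≤
      ∫ t in Set.Ioc (0:ℝ) T, b t := by
    apply integral_mono_of_nonneg
    · exact Filter.Eventually.of_forall (fun t => abs_nonneg _)
    · exact hbi
    · refine (ae_restrict_iff' measurableSet_Ioc).mpr
        (Filter.Eventually.of_forall (fun t ht => ?_))
      exact (key t ht.1).trans (small t ht)
  calc |∫ t in (0:ℝ)..T,
      ((∫ ζ in K, p t z ζ * g j ζ) - ∫ ζ in ball y r, p t z ζ)|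
      ≤ ∫ t in Set.Ioc (0:ℝ) T,
        |(∫ ζ in K, p t z ζ * g j ζ) - ∫ ζ in ball y r, p t z ζ| := heqI ▸ habs
    _ ≤ ∫ t in Set.Ioc (0:ℝ) T, b t := hmono
    _ ≤ ε := hbval
end
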